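/- Let X ∈ ℝ^{m×n} be T₁-sparse with parameters (v, t₁, t₂, c) with c > 0 and v ≥ 1, let u > 0 satisfy n·(n+1)·u ≤ 1/64, and let s satisfy s ≥ 11·(m·u + (n+1)·u)·(v·t₁ + n·t₂)·c². Suppose Y ∈ ℝ^{n×n} and E ∈ ℝ^{n×n} satisfy YᵀY = XᵀX + s·I + E with ‖E‖₂ ≤ 0.1·s, and suppose W ∈ ℝ^{m×n} is such that for every row index i there exists ΔY_i ∈ ℝ^{n×n} with ‖ΔY_i‖₂ ≤ 1.03·n·√n·u·c·√t₁ and w_iᵀ·(Y + ΔY_i) = x_iᵀ, where w_iᵀ and x_iᵀ are the i-th rows of W and X. Then ‖W·Y − X‖₂ ≤ ‖W·Y − X‖_F ≤ 1.09·n·√n·u·√t₁·√(v·t₁ + n·t₂)·c²/√(σ_min(X)² + 0.9·s). -/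

import Mathlib

open Matrix Finset

noncomputable def specNorm {m n : ℕ} (A : Matrix (Fin m) (Fin n) ℝ) : ℝ :=
  ‖(Matrix.toEuclideanLin A).toContinuousLinearMap‖

noncomputable def frobNorm {m n : ℕ} (A : Matrix (Fin m) (Fin n) ℝ) : ℝ :=
  Real.sqrt (∑ i, ∑ j, (A i j) ^ 2)

noncomputable def gNorm {m n : ℕ} (A : Matrix (Fin m) (Fin n) ℝ) : ℝ :=
  ⨆ j : Fin n, Real.sqrt (∑ i, (A i j) ^ 2)

noncomputable def sigmaMin {m n : ℕ} (A : Matrix (Fin m) (Fin n) ℝ) : ℝ :=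
  ⨅ x : Metric.sphere (0 : EuclideanSpace ℝ (Fin n)) 1,
    ‖(Matrix.toEuclideanLin A) (x : EuclideanSpace ℝ (Fin n))‖

noncomputable def condNum {m n : ℕ} (A : Matrix (Fin m) (Fin n) ℝ) : ℝ :=
  specNorm A / sigmaMin A

def IsT1Sparse {m n : ℕ} (X : Matrix (Fin m) (Fin n) ℝ) (v t₁ t₂ : ℕ) (c : ℝ) : Prop :=
  ∃ S : Finset (Fin n), S.card = v ∧
    (∀ j ∈ S, Set.ncard {i | X i j ≠ 0} ≤ t₁) ∧
    (∀ j ∉ S, Set.ncard {i | X i j ≠ 0} ≤ t₂) ∧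
    ∀ i j, |X i j| ≤ c

/-! Row by row, `w_i (Y + ΔY_i) = x_i` makes the residual `w_i Y - x_i = -w_i ΔY_i`, of norm at most
`ε ‖w_i‖` with `ε = 1.03 n √n u c √t₁`. The Gram identity bounds `Y` below by
`σ₀ = √(σ_min(X)² + 0.9 s)`, so `Y + ΔY_i` is bounded below by `σ₀ - ε`; being square, so is its
transpose, whence `‖w_i‖ ≤ ‖x_i‖ / (σ₀ - ε)`. Summing over rows gives
`‖WY - X‖_F ≤ ε ‖X‖_F / (σ₀ - ε)`, sparsity gives `‖X‖_F² ≤ (v t₁ + n t₂) c²`, and the size of the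
shift `s` makes `109 ε ≤ 6 σ₀`, which turns `1 / (σ₀ - ε)` into `(1.09 / 1.03) / σ₀`. -/

open scoped Matrix.Norms.L2Operator
open WithLp

section

variable {k m n : ℕ}

lemma norm_toLp_sq (x : Fin k → ℝ) : ‖toLp 2 x‖ ^ 2 = x ⬝ᵥ x := by
  rw [EuclideanSpace.real_norm_sq_eq]
  simp [dotProduct, sq]

lemma abs_dotProduct_le_norm_mul_norm (x y : Fin k → ℝ) :
    |x ⬝ᵥ y| ≤ ‖toLp 2 x‖ * ‖toLp 2 y‖ := by
  simpa [EuclideanSpace.inner_toLp_toLp, dotProduct_comm] using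
    abs_real_inner_le_norm (toLp 2 x) (toLp 2 y)

lemma frobNorm_eq_sqrt_sum_norm_sq (A : Matrix (Fin m) (Fin n) ℝ) :
    frobNorm A = √(∑ i, ‖toLp 2 (A i)‖ ^ 2) := by
  simp_rw [norm_toLp_sq]
  simp only [frobNorm, dotProduct, sq]

lemma frobNorm_le_mul_frobNorm {A : Matrix (Fin m) (Fin n) ℝ} {B : Matrix (Fin m) (Fin k) ℝ}
    {κ : ℝ} (hκ : 0 ≤ κ) (h : ∀ i, ‖toLp 2 (A i)‖ ≤ κ * ‖toLp 2 (B i)‖) :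
    frobNorm A ≤ κ * frobNorm B := by
  rw [frobNorm_eq_sqrt_sum_norm_sq, frobNorm_eq_sqrt_sum_norm_sq, ← Real.sqrt_sq hκ,
    ← Real.sqrt_mul (sq_nonneg κ), Finset.mul_sum]
  gcongr with i
  rw [← mul_pow]
  exact pow_le_pow_left₀ (norm_nonneg _) (h i) 2

lemma frobNorm_zero : frobNorm (0 : Matrix (Fin m) (Fin n) ℝ) = 0 := by
  simp [frobNorm]

lemma specNorm_eq_norm (A : Matrix (Fin m) (Fin n) ℝ) : specNorm A = ‖A‖ := rfl

lemma specNorm_nonneg (A : Matrix (Fin m) (Fin n) ℝ) : 0 ≤ specNorm A := norm_nonneg _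

lemma norm_mulVec_le_specNorm (A : Matrix (Fin m) (Fin n) ℝ) (x : Fin n → ℝ) :
    ‖toLp 2 (A *ᵥ x)‖ ≤ specNorm A * ‖toLp 2 x‖ :=
  A.l2_opNorm_mulVec (toLp 2 x)

lemma norm_vecMul_le_specNorm (A : Matrix (Fin m) (Fin n) ℝ) (w : Fin m → ℝ) :
    ‖toLp 2 (w ᵥ* A)‖ ≤ specNorm A * ‖toLp 2 w‖ := by
  rw [← mulVec_transpose, specNorm_eq_norm, ← A.l2_opNorm_conjTranspose,
    conjTranspose_eq_transpose_of_trivial]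
  exact Aᵀ.l2_opNorm_mulVec (toLp 2 w)

lemma specNorm_le_frobNorm (A : Matrix (Fin m) (Fin n) ℝ) : specNorm A ≤ frobNorm A := by
  refine ContinuousLinearMap.opNorm_le_bound _ (Real.sqrt_nonneg _) fun x => ?_
  obtain ⟨x, rfl⟩ : ∃ y, toLp 2 y = x := ⟨ofLp x, toLp_ofLp 2 x⟩
  have hrow : ∀ i, (A *ᵥ x) i ^ 2 ≤ ‖toLp 2 (A i)‖ ^ 2 * ‖toLp 2 x‖ ^ 2 := fun i => by
    rw [← mul_pow, ← sq_abs]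
    exact pow_le_pow_left₀ (abs_nonneg _) (abs_dotProduct_le_norm_mul_norm _ _) 2
  rw [frobNorm_eq_sqrt_sum_norm_sq, ← Real.sqrt_sq (norm_nonneg (toLp 2 x)),
    ← Real.sqrt_mul (Finset.sum_nonneg fun i _ => sq_nonneg _), Finset.sum_mul]
  refine Real.le_sqrt_of_sq_le ?_
  change ‖toLp 2 (A *ᵥ x)‖ ^ 2 ≤ _
  calc ‖toLp 2 (A *ᵥ x)‖ ^ 2 = ∑ i, (A *ᵥ x) i ^ 2 := by
        rw [norm_toLp_sq]
        simp only [dotProduct, sq]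
    _ ≤ _ := Finset.sum_le_sum fun i _ => hrow i

lemma sigmaMin_mul_norm_le (A : Matrix (Fin m) (Fin n) ℝ) (x : Fin n → ℝ) :
    sigmaMin A * ‖toLp 2 x‖ ≤ ‖toLp 2 (A *ᵥ x)‖ := by
  rcases (norm_nonneg (toLp 2 x)).eq_or_lt with hx | hx
  · rw [← hx, mul_zero]
    exact norm_nonneg _
  have hunit : ‖toLp 2 x‖⁻¹ • toLp 2 x ∈ Metric.sphere (0 : EuclideanSpace ℝ (Fin n)) 1 := by
    simp [norm_smul, hx.ne']
  have hbdd : BddBelow (Set.range fun y : Metric.sphere (0 : EuclideanSpace ℝ (Fin n)) 1 =>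
      ‖toEuclideanLin A (y : EuclideanSpace ℝ (Fin n))‖) :=
    ⟨0, by rintro _ ⟨y, rfl⟩; exact norm_nonneg _⟩
  have hle : sigmaMin A ≤ ‖toLp 2 x‖⁻¹ * ‖toLp 2 (A *ᵥ x)‖ := by
    have := ciInf_le hbdd ⟨_, hunit⟩
    rwa [map_smul, norm_smul, norm_inv, norm_norm] at this
  rw [mul_comm]
  exact (le_inv_mul_iff₀ hx).mp hle

lemma norm_mulVec_sq (A : Matrix (Fin m) (Fin n) ℝ) (x : Fin n → ℝ) :
    ‖toLp 2 (A *ᵥ x)‖ ^ 2 = x ⬝ᵥ ((Aᵀ * A) *ᵥ x) := by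
  rw [← mulVec_mulVec, dotProduct_mulVec, vecMul_transpose, norm_toLp_sq]

lemma sqrt_mul_norm_le_of_gram_eq {X : Matrix (Fin m) (Fin n) ℝ} {Y : Matrix (Fin k) (Fin n) ℝ}
    {E : Matrix (Fin n) (Fin n) ℝ} {s e : ℝ} (hGram : Yᵀ * Y = Xᵀ * X + s • 1 + E)
    (hE : specNorm E ≤ e) (x : Fin n → ℝ) :
    √(sigmaMin X ^ 2 + s - e) * ‖toLp 2 x‖ ≤ ‖toLp 2 (Y *ᵥ x)‖ := by
  have hgram : ‖toLp 2 (Y *ᵥ x)‖ ^ 2 =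
      ‖toLp 2 (X *ᵥ x)‖ ^ 2 + s * ‖toLp 2 x‖ ^ 2 + x ⬝ᵥ (E *ᵥ x) := by
    rw [norm_mulVec_sq, hGram, add_mulVec, add_mulVec, smul_mulVec, one_mulVec, dotProduct_add,
      dotProduct_add, dotProduct_smul, ← norm_mulVec_sq, smul_eq_mul, ← norm_toLp_sq]
  have hX : (sigmaMin X * ‖toLp 2 x‖) ^ 2 ≤ ‖toLp 2 (X *ᵥ x)‖ ^ 2 :=
    pow_le_pow_left₀ (mul_nonneg (Real.iInf_nonneg fun _ => norm_nonneg _) (norm_nonneg _))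
      (sigmaMin_mul_norm_le X x) 2
  have hEx : |x ⬝ᵥ (E *ᵥ x)| ≤ e * ‖toLp 2 x‖ ^ 2 :=
    calc |x ⬝ᵥ (E *ᵥ x)| ≤ ‖toLp 2 x‖ * (specNorm E * ‖toLp 2 x‖) :=
          (abs_dotProduct_le_norm_mul_norm _ _).trans (by gcongr; exact norm_mulVec_le_specNorm E x)
      _ ≤ e * ‖toLp 2 x‖ ^ 2 := by nlinarith [sq_nonneg ‖toLp 2 x‖]
  calc √(sigmaMin X ^ 2 + s - e) * ‖toLp 2 x‖
      = √((sigmaMin X ^ 2 + s - e) * ‖toLp 2 x‖ ^ 2) := by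
        rw [Real.sqrt_mul' _ (sq_nonneg _), Real.sqrt_sq (norm_nonneg _)]
    _ ≤ √(‖toLp 2 (Y *ᵥ x)‖ ^ 2) := by
        gcongr
        nlinarith [abs_le.mp hEx]
    _ = ‖toLp 2 (Y *ᵥ x)‖ := Real.sqrt_sq (norm_nonneg _)

lemma mul_norm_le_norm_vecMul {B : Matrix (Fin n) (Fin n) ℝ} {σ : ℝ}
    (hB : ∀ x, σ * ‖toLp 2 x‖ ≤ ‖toLp 2 (B *ᵥ x)‖) (w : Fin n → ℝ) :
    σ * ‖toLp 2 w‖ ≤ ‖toLp 2 (w ᵥ* B)‖ := by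
  rcases le_or_gt σ 0 with hσ | hσ
  · exact (mul_nonpos_of_nonpos_of_nonneg hσ (norm_nonneg _)).trans (norm_nonneg _)
  have hinj : Function.Injective B.mulVecLin := by
    rw [← LinearMap.ker_eq_bot, LinearMap.ker_eq_bot']
    intro x hx
    have := hB x
    rw [← mulVecLin_apply, hx, toLp_zero, norm_zero] at this
    simpa using nonpos_of_mul_nonpos_right this hσ
  -- writing `w = B z`, `‖w‖² = (w B) ⬝ z` and `σ ‖z‖ ≤ ‖w‖`
  obtain ⟨z, rfl⟩ := LinearMap.injective_iff_surjective.mp hinj w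
  rw [mulVecLin_apply]
  have hz := hB z
  have hsq : ‖toLp 2 (B *ᵥ z)‖ ^ 2 ≤ ‖toLp 2 ((B *ᵥ z) ᵥ* B)‖ * ‖toLp 2 z‖ :=
    calc ‖toLp 2 (B *ᵥ z)‖ ^ 2 = (B *ᵥ z) ⬝ᵥ (B *ᵥ z) := norm_toLp_sq _
      _ = ((B *ᵥ z) ᵥ* B) ⬝ᵥ z := dotProduct_mulVec _ _ _
      _ ≤ ‖toLp 2 ((B *ᵥ z) ᵥ* B)‖ * ‖toLp 2 z‖ :=
          (le_abs_self _).trans (abs_dotProduct_le_norm_mul_norm _ _)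
  rcases (norm_nonneg (toLp 2 (B *ᵥ z))).eq_or_lt with h0 | hpos
  · rw [← h0, mul_zero]
    exact norm_nonneg _
  refine le_of_mul_le_mul_right ?_ hpos
  nlinarith [mul_le_mul_of_nonneg_left hsq hσ.le,
    mul_le_mul_of_nonneg_left hz (norm_nonneg (toLp 2 ((B *ᵥ z) ᵥ* B)))]

lemma sub_mul_norm_le_norm_add_mulVec {B Δ : Matrix (Fin m) (Fin n) ℝ} {σ ε : ℝ}
    (hB : ∀ x, σ * ‖toLp 2 x‖ ≤ ‖toLp 2 (B *ᵥ x)‖) (hΔ : specNorm Δ ≤ ε) (x : Fin n → ℝ) :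
    (σ - ε) * ‖toLp 2 x‖ ≤ ‖toLp 2 ((B + Δ) *ᵥ x)‖ := by
  have hΔx : ‖toLp 2 (Δ *ᵥ x)‖ ≤ ε * ‖toLp 2 x‖ :=
    (norm_mulVec_le_specNorm Δ x).trans (by gcongr)
  have htri := norm_le_add_norm_add (toLp 2 (B *ᵥ x)) (toLp 2 (Δ *ᵥ x))
  rw [add_mulVec, toLp_add]
  linarith [hB x]

lemma norm_vecMul_sub_le {B Δ : Matrix (Fin n) (Fin n) ℝ} {σ ε : ℝ}
    (hB : ∀ x, σ * ‖toLp 2 x‖ ≤ ‖toLp 2 (B *ᵥ x)‖) (hεσ : ε < σ) (hΔ : specNorm Δ ≤ ε)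
    {w x : Fin n → ℝ} (hw : w ᵥ* (B + Δ) = x) :
    ‖toLp 2 (w ᵥ* B - x)‖ ≤ ε / (σ - ε) * ‖toLp 2 x‖ := by
  have hε : 0 ≤ ε := (specNorm_nonneg Δ).trans hΔ
  have hw' : (σ - ε) * ‖toLp 2 w‖ ≤ ‖toLp 2 x‖ :=
    hw ▸ mul_norm_le_norm_vecMul (sub_mul_norm_le_norm_add_mulVec hB hΔ) w
  have hres : w ᵥ* B - x = -(w ᵥ* Δ) := by
    rw [← hw, vecMul_add]
    abel
  rw [hres, toLp_neg, norm_neg, div_mul_eq_mul_div, le_div_iff₀ (sub_pos.mpr hεσ)]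
  calc ‖toLp 2 (w ᵥ* Δ)‖ * (σ - ε) ≤ ε * ‖toLp 2 w‖ * (σ - ε) := by
        gcongr
        exact (norm_vecMul_le_specNorm Δ w).trans (by gcongr)
    _ = ε * ((σ - ε) * ‖toLp 2 w‖) := by ring
    _ ≤ ε * ‖toLp 2 x‖ := by gcongr

lemma frobNorm_mul_sub_le {W X : Matrix (Fin m) (Fin n) ℝ} {Y : Matrix (Fin n) (Fin n) ℝ}
    {σ ε : ℝ} (hY : ∀ x, σ * ‖toLp 2 x‖ ≤ ‖toLp 2 (Y *ᵥ x)‖) (hε : 0 ≤ ε) (hεσ : ε < σ)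
    (hW : ∀ i, ∃ Δ, specNorm Δ ≤ ε ∧ W i ᵥ* (Y + Δ) = X i) :
    frobNorm (W * Y - X) ≤ ε / (σ - ε) * frobNorm X :=
  frobNorm_le_mul_frobNorm (div_nonneg hε (sub_nonneg.mpr hεσ.le)) fun i => by
    obtain ⟨Δ, hΔ, hi⟩ := hW i
    exact norm_vecMul_sub_le hY hεσ hΔ hi

lemma mul_sub_eq_zero_of_specNorm_le_zero {W X : Matrix (Fin m) (Fin n) ℝ}
    {Y : Matrix (Fin n) (Fin n) ℝ} (hW : ∀ i, ∃ Δ, specNorm Δ ≤ 0 ∧ W i ᵥ* (Y + Δ) = X i) :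
    W * Y - X = 0 := by
  ext i j
  obtain ⟨Δ, hΔ, hi⟩ := hW i
  rw [norm_le_zero_iff.mp (show ‖Δ‖ ≤ 0 from hΔ), add_zero] at hi
  exact sub_eq_zero.mpr (congrFun hi j)

lemma sum_sq_le_of_ncard_support_le {y : Fin m → ℝ} {c : ℝ} {t : ℕ} (hc : ∀ i, |y i| ≤ c)
    (ht : {i | y i ≠ 0}.ncard ≤ t) : ∑ i, y i ^ 2 ≤ t * c ^ 2 := by
  classical
  have hsupp : #{i | y i ≠ 0} ≤ t := by
    rwa [Set.ncard_eq_toFinset_card', Set.toFinset_ofPred] at ht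
  calc ∑ i, y i ^ 2 = ∑ i with y i ≠ 0, y i ^ 2 :=
        (Finset.sum_filter_of_ne (p := (y · ≠ 0)) fun _ _ h hi => h (by simp [hi])).symm
    _ ≤ #{i | y i ≠ 0} • c ^ 2 :=
        Finset.sum_le_card_nsmul _ _ _ fun i _ => by
          simpa using pow_le_pow_left₀ (abs_nonneg _) (hc i) 2
    _ ≤ t * c ^ 2 := by
        rw [nsmul_eq_mul]
        gcongr

lemma IsT1Sparse.frobNorm_le {X : Matrix (Fin m) (Fin n) ℝ} {v t₁ t₂ : ℕ} {c : ℝ}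
    (hX : IsT1Sparse X v t₁ t₂ c) (hc : 0 ≤ c) : frobNorm X ≤ √(v * t₁ + n * t₂) * c := by
  obtain ⟨S, rfl, hS, hSc, hbound⟩ := hX
  have hcols : ∑ j, ∑ i, X i j ^ 2 ≤ (#S * t₁ + n * t₂) * c ^ 2 := by
    rw [← Finset.sum_add_sum_compl S]
    have hin : ∑ j ∈ S, ∑ i, X i j ^ 2 ≤ #S • (t₁ * c ^ 2) :=
      Finset.sum_le_card_nsmul _ _ _ fun j hj =>
        sum_sq_le_of_ncard_support_le (fun i => hbound i j) (hS j hj)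
    have hout : ∑ j ∈ Sᶜ, ∑ i, X i j ^ 2 ≤ #Sᶜ • (t₂ * c ^ 2) :=
      Finset.sum_le_card_nsmul _ _ _ fun j hj =>
        sum_sq_le_of_ncard_support_le (fun i => hbound i j) (hSc j (Finset.mem_compl.mp hj))
    have hcard : (#Sᶜ : ℝ) ≤ n := by
      exact_mod_cast (Finset.card_le_univ Sᶜ).trans_eq (Fintype.card_fin n)
    rw [nsmul_eq_mul] at hin hout
    nlinarith [mul_le_mul_of_nonneg_right hcard (by positivity : (0 : ℝ) ≤ t₂ * c ^ 2)]
  rw [frobNorm, Finset.sum_comm, ← Real.sqrt_sq hc, ← Real.sqrt_mul (by positivity)]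
  exact Real.sqrt_le_sqrt hcols

end

lemma mul_le_sqrt_of_shift {a t u c s σ : ℝ} (ha : 0 ≤ a) (ht : 0 ≤ t) (hu : 0 ≤ u)
    (hau : a * (a + 1) * u ≤ 1 / 64) (hs : 11 * ((a + 1) * u) * t * c ^ 2 ≤ s) :
    109 * (1.03 * a * √a * u * c * √t) ≤ 6 * √(σ ^ 2 + 0.9 * s) := by
  have ha2u : a ^ 2 * u ≤ 1 / 64 := by nlinarith
  have hsq : (109 * (1.03 * a * √a * u * c * √t)) ^ 2 =
      11881 * 1.0609 * (a ^ 2 * u) * (a * u * t * c ^ 2) := by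
    calc _ = 11881 * 1.0609 * a ^ 2 * √a ^ 2 * u ^ 2 * c ^ 2 * √t ^ 2 := by ring
      _ = _ := by rw [Real.sq_sqrt ha, Real.sq_sqrt ht]; ring
  have hs0 : 0 ≤ s := le_trans (by positivity) hs
  have hrhs : (6 * √(σ ^ 2 + 0.9 * s)) ^ 2 = 36 * (σ ^ 2 + 0.9 * s) := by
    rw [mul_pow, Real.sq_sqrt (by positivity)]
    norm_num
  refine le_of_sq_le_sq ?_ (by positivity)
  rw [hsq, hrhs]
  nlinarith [mul_le_mul_of_nonneg_right ha2u (by positivity : 0 ≤ a * u * t * c ^ 2),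
    sq_nonneg σ, (by positivity : 0 ≤ u * t * c ^ 2)]

lemma div_sub_le_of_mul_le {ε σ : ℝ} (hε : 0 < ε) (h : 109 * ε ≤ 6 * σ) :
    ε / (σ - ε) ≤ 1.09 / 1.03 * (ε / σ) := by
  rw [← mul_div_assoc, div_le_div_iff₀ (by linarith) (by linarith)]
  nlinarith

theorem stmt12_general {m n : ℕ} (X W : Matrix (Fin m) (Fin n) ℝ)
    (Y E : Matrix (Fin n) (Fin n) ℝ) (v t₁ t₂ : ℕ) (c u s : ℝ)
    (hv1 : 1 ≤ v) (hc : 0 < c)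
    (hX : IsT1Sparse X v t₁ t₂ c) (hu : 0 < u)
    (hnnu : (n : ℝ) * (n + 1) * u ≤ 1 / 64)
    (hs : 11 * ((m : ℝ) * u + ((n : ℝ) + 1) * u) * ((v : ℝ) * t₁ + (n : ℝ) * t₂) * c ^ 2 ≤ s)
    (hGram : Yᵀ * Y = Xᵀ * X + s • (1 : Matrix (Fin n) (Fin n) ℝ) + E)
    (hE : specNorm E ≤ 0.1 * s)
    (hW : ∀ i : Fin m, ∃ ΔY : Matrix (Fin n) (Fin n) ℝ,
      specNorm ΔY ≤ 1.03 * (n : ℝ) * Real.sqrt n * u * c * Real.sqrt t₁ ∧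
      Matrix.vecMul (W i) (Y + ΔY) = X i) :
    specNorm (W * Y - X) ≤ frobNorm (W * Y - X) ∧
    frobNorm (W * Y - X) ≤
      1.09 * (n : ℝ) * Real.sqrt n * u * Real.sqrt t₁ *
        Real.sqrt ((v : ℝ) * t₁ + (n : ℝ) * t₂) * c ^ 2 /
        Real.sqrt (sigmaMin X ^ 2 + 0.9 * s) := by
  refine ⟨specNorm_le_frobNorm _, ?_⟩
  set σ₀ := √(sigmaMin X ^ 2 + 0.9 * s)
  set ε := 1.03 * (n : ℝ) * √n * u * c * √t₁
  have hY (x : Fin n → ℝ) : σ₀ * ‖toLp 2 x‖ ≤ ‖toLp 2 (Y *ᵥ x)‖ := by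
    simpa only [show sigmaMin X ^ 2 + s - 0.1 * s = sigmaMin X ^ 2 + 0.9 * s by ring] using
      sqrt_mul_norm_le_of_gram_eq hGram hE x
  have hs' : 11 * ((n + 1) * u) * t₁ * c ^ 2 ≤ s := by
    refine le_trans ?_ hs
    gcongr
    · linarith [mul_nonneg (Nat.cast_nonneg m : (0 : ℝ) ≤ m) hu.le]
    · nlinarith [(Nat.one_le_cast.mpr hv1 : (1 : ℝ) ≤ v), (by positivity : (0 : ℝ) ≤ n * t₂)]
  have hεσ : 109 * ε ≤ 6 * σ₀ :=
    mul_le_sqrt_of_shift (Nat.cast_nonneg n) (Nat.cast_nonneg t₁) hu.le hnnu hs'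
  rcases (show 0 ≤ ε by positivity).eq_or_lt with hε | hε
  · -- `σ₀` may vanish here, but every `ΔY_i` is zero
    rw [mul_sub_eq_zero_of_specNorm_le_zero (hε ▸ hW), frobNorm_zero]
    positivity
  calc frobNorm (W * Y - X) ≤ ε / (σ₀ - ε) * frobNorm X :=
        frobNorm_mul_sub_le hY hε.le (by linarith) hW
    _ ≤ 1.09 / 1.03 * (ε / σ₀) * (√(v * t₁ + n * t₂) * c) :=
        mul_le_mul (div_sub_le_of_mul_le hε hεσ) (hX.frobNorm_le hc.le) (Real.sqrt_nonneg _)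
          (by positivity)
    _ = _ := by ring

/-- Bound on ‖WY − X‖ for the shifted first step applied to a T₁-sparse X. -/
theorem stmt12 {m n : ℕ} (X W : Matrix (Fin m) (Fin n) ℝ)
    (Y E : Matrix (Fin n) (Fin n) ℝ) (v t₁ t₂ : ℕ) (c u s : ℝ)
    (hv1 : 1 ≤ v) (hvn : v ≤ n) (ht : t₂ ≤ t₁) (htm : t₁ ≤ m) (hc : 0 < c)
    (hX : IsT1Sparse X v t₁ t₂ c) (hu : 0 < u)
    (hnnu : (n : ℝ) * (n + 1) * u ≤ 1 / 64)
    (hs : 11 * ((m : ℝ) * u + ((n : ℝ) + 1) * u) * ((v : ℝ) * t₁ + (n : ℝ) * t₂) * c ^ 2 ≤ s)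
    (hGram : Yᵀ * Y = Xᵀ * X + s • (1 : Matrix (Fin n) (Fin n) ℝ) + E)
    (hE : specNorm E ≤ 0.1 * s)
    (hW : ∀ i : Fin m, ∃ ΔY : Matrix (Fin n) (Fin n) ℝ,
      specNorm ΔY ≤ 1.03 * (n : ℝ) * Real.sqrt n * u * c * Real.sqrt t₁ ∧
      Matrix.vecMul (W i) (Y + ΔY) = X i) :
    specNorm (W * Y - X) ≤ frobNorm (W * Y - X) ∧
    frobNorm (W * Y - X) ≤
      1.09 * (n : ℝ) * Real.sqrt n * u * Real.sqrt t₁ *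
        Real.sqrt ((v : ℝ) * t₁ + (n : ℝ) * t₂) * c ^ 2 /
        Real.sqrt (sigmaMin X ^ 2 + 0.9 * s) :=
  stmt12_general X W Y E v t₁ t₂ c u s hv1 hc hX hu hnnu hs hGram hE hW
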